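/- arXiv:2508.21299 — 7 statements merged into one kernel-verified Lean document; each statement's English description precedes it below -/
import Mathlib

section
/- Let n ≥ 1 and d ≥ 0 be integers, and let g : ℝⁿ → ℝⁿ be a map each of whose components is a polynomial in x₁,…,xₙ of degree at most d+1. Suppose that xᵀ g(x) = 0 for every x in the affine hyperplane H = {x ∈ ℝⁿ : Σᵢ xᵢ = 1}. Then there exists a matrix-valued map A : ℝⁿ → ℝ^{n×n} whose entries are polynomials of degree at most d, satisfying A(x)ᵀ = −A(x) for all x, such that g(x) = A(x) x for all x ∈ H. -/
/-!
Homogenize each `gᵢ` to degree `d + 1` with respect to `s = ∑ₖ xₖ`; the resulting `Pᵢ` agree with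
`gᵢ` on `H`, so the form `F = ∑ᵢ xᵢ Pᵢ`, homogeneous of degree `d + 2`, vanishes on `H` and hence,
by scaling, identically. Differentiating `F = 0` gives `∑ᵢ xᵢ ∂ⱼPᵢ = -Pⱼ`, and together with Euler's
identity `∑ⱼ xⱼ ∂ⱼPᵢ = (d + 1) Pᵢ` this shows that the skew matrix `(∂ⱼPᵢ - ∂ᵢPⱼ) / (d + 2)`
maps `x` to `P(x)`.
-/

open MvPolynomial Matrix

namespace MvPolynomial

section Homogenize

variable {R σ : Type*} [CommSemiring R]

theorem IsHomogeneous.eval_smul {φ : MvPolynomial σ R} {m : ℕ} (hφ : φ.IsHomogeneous m)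
    (c : R) (x : σ → R) : eval (c • x) φ = c ^ m * eval x φ := by
  simp only [eval_eq, Finset.mul_sum]
  refine Finset.sum_congr rfl fun u hu => ?_
  simp only [Pi.smul_apply, smul_eq_mul, mul_pow, Finset.prod_mul_distrib,
    Finset.prod_pow_eq_pow_sum, ← hφ.degree_eq_sum_deg_support hu]
  ring

/-- Only meaningful when `p.totalDegree ≤ N`: otherwise the exponents `N - u.degree` truncate. -/
noncomputable def homogenize (ℓ : MvPolynomial σ R) (N : ℕ) (p : MvPolynomial σ R) :
    MvPolynomial σ R :=
  ∑ u ∈ p.support, monomial u (coeff u p) * ℓ ^ (N - u.degree)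

theorem isHomogeneous_homogenize {ℓ p : MvPolynomial σ R} {N : ℕ} (hℓ : ℓ.IsHomogeneous 1)
    (hp : p.totalDegree ≤ N) : (homogenize ℓ N p).IsHomogeneous N :=
  IsHomogeneous.sum _ _ _ fun u hu => by
    have hu' : u.degree ≤ N := (le_totalDegree hu).trans hp
    have h := (isHomogeneous_monomial (coeff u p) (rfl : u.degree = _)).mul (hℓ.pow (N - u.degree))
    rwa [one_mul, Nat.add_sub_cancel' hu'] at h

theorem eval_homogenize {ℓ : MvPolynomial σ R} {x : σ → R} (hx : eval x ℓ = 1) (N : ℕ)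
    (p : MvPolynomial σ R) : eval x (homogenize ℓ N p) = eval x p := by
  conv_rhs => rw [p.as_sum, map_sum]
  simp only [homogenize, map_sum, map_mul, map_pow, hx, one_pow, mul_one]

end Homogenize

theorem IsHomogeneous.eq_zero_of_eval_eq_zero_of_eval_eq_one {K σ : Type*} [Field K] [Infinite K]
    {F ℓ : MvPolynomial σ K} {m : ℕ} (hF : F.IsHomogeneous m) (hℓ : ℓ.IsHomogeneous 1)
    (hℓ0 : ℓ ≠ 0) (h : ∀ x, eval x ℓ = 1 → eval x F = 0) : F = 0 := by
  have hFℓ : F * ℓ = 0 := (hF.mul hℓ).eq_zero_of_forall_eval_eq_zero fun x => by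
    rw [eval_mul]
    by_cases hc : eval x ℓ = 0
    · rw [hc, mul_zero]
    have hx : x = eval x ℓ • (eval x ℓ)⁻¹ • x := by rw [smul_smul, mul_inv_cancel₀ hc, one_smul]
    have hy : eval ((eval x ℓ)⁻¹ • x) ℓ = 1 := by
      rw [hℓ.eval_smul, pow_one, inv_mul_cancel₀ hc]
    rw [hx, hF.eval_smul, h _ hy, mul_zero, zero_mul]
  exact (mul_eq_zero.mp hFℓ).resolve_right hℓ0

section Curl

variable {R σ : Type*} [CommRing R]

noncomputable def curlMatrix (P : σ → MvPolynomial σ R) : Matrix σ σ (MvPolynomial σ R) :=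
  of fun i j => pderiv j (P i) - pderiv i (P j)

theorem curlMatrix_transpose (P : σ → MvPolynomial σ R) : (curlMatrix P)ᵀ = -curlMatrix P := by
  ext i j
  simp [curlMatrix]

theorem sum_X_mul_pderiv_eq_neg [Fintype σ] [DecidableEq σ] {P : σ → MvPolynomial σ R}
    (hP : ∑ i, X i * P i = 0) (j : σ) : ∑ i, X i * pderiv j (P i) = -P j := by
  have h := congrArg (pderiv j) hP
  simp only [map_sum, pderiv_mul, Finset.sum_add_distrib, pderiv_X, Pi.single_apply,
    ite_mul, one_mul, zero_mul, Finset.sum_ite_eq', Finset.mem_univ, if_true, map_zero] at h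
  exact eq_neg_of_add_eq_zero_right h

theorem sum_curlMatrix_mul_X [Fintype σ] {P : σ → MvPolynomial σ R} {m : ℕ}
    (hPh : ∀ i, (P i).IsHomogeneous (m + 1)) (hP : ∑ i, X i * P i = 0) (i : σ) :
    ∑ j, curlMatrix P i j * X j = (m + 2) • P i := by
  classical
  simp only [curlMatrix, of_apply, sub_mul, Finset.sum_sub_distrib]
  simp_rw [mul_comm _ (X _), (hPh i).sum_X_mul_pderiv, sum_X_mul_pderiv_eq_neg hP]
  rw [sub_neg_eq_add, ← succ_nsmul]

end Curl

end MvPolynomial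

/-- **Theorem (main).** Let `n ≥ 1`, `d ≥ 0`, and let `g : ℝⁿ → ℝⁿ` have polynomial
components of degree at most `d+1`.  If `xᵀ g(x) = 0` for every `x` with `∑ᵢ xᵢ = 1`,
then there is a skew-symmetric polynomial matrix `A(x)` of degree at most `d`
with `g(x) = A(x) x` for all `x` in the hyperplane. -/
theorem replicator_skew_representation_on_hyperplane
    (n d : ℕ) (hn : 1 ≤ n)
    (g : Fin n → MvPolynomial (Fin n) ℝ)
    (hdeg : ∀ i, (g i).totalDegree ≤ d + 1)
    (hzero : ∀ x : Fin n → ℝ, ∑ i, x i = 1 → ∑ i, x i * eval x (g i) = 0) :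
    ∃ A : Matrix (Fin n) (Fin n) (MvPolynomial (Fin n) ℝ),
      (∀ i j, (A i j).totalDegree ≤ d) ∧
      (∀ x : Fin n → ℝ,
        (Matrix.of fun i j => eval x (A i j))ᵀ = -(Matrix.of fun i j => eval x (A i j))) ∧
      (∀ x : Fin n → ℝ, ∑ i, x i = 1 →
        ∀ i, eval x (g i) = ∑ j, eval x (A i j) * x j) := by
  set s : MvPolynomial (Fin n) ℝ := ∑ k, X k
  have hs : s.IsHomogeneous 1 := IsHomogeneous.sum _ _ _ fun k _ => isHomogeneous_X ℝ k
  have hs0 : s ≠ 0 := fun h => by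
    simpa [s, Nat.one_le_iff_ne_zero.mp hn] using congrArg (eval fun _ => (1 : ℝ)) h
  set P := fun i => homogenize s (d + 1) (g i)
  have hP : ∀ i, (P i).IsHomogeneous (d + 1) := fun i => isHomogeneous_homogenize hs (hdeg i)
  have hPg : ∀ x, ∑ k, x k = 1 → ∀ i, eval x (P i) = eval x (g i) := fun x hx i =>
    eval_homogenize (by simpa [s] using hx) _ _
  have hF : ∑ i, X i * P i = 0 := by
    refine (IsHomogeneous.sum _ _ _ fun i _ => (isHomogeneous_X ℝ i).mul (hP i))
      |>.eq_zero_of_eval_eq_zero_of_eval_eq_one hs hs0 fun x hx => ?_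
    have hx : ∑ k, x k = 1 := by simpa [s] using hx
    simpa [hPg x hx] using hzero x hx
  refine ⟨((d : ℝ) + 2)⁻¹ • curlMatrix P, fun i j => ?_, fun x => ?_, fun x hx i => ?_⟩
  · exact (totalDegree_smul_le _ _).trans ((hP i).pderiv.sub (hP j).pderiv).totalDegree_le
  · ext i j
    simpa using congrArg (fun M => eval x ((((d : ℝ) + 2)⁻¹ • M) i j)) (curlMatrix_transpose P)
  · calc eval x (g i) = eval x (P i) := (hPg x hx i).symm
      _ = ((d : ℝ) + 2)⁻¹ * eval x (∑ j, curlMatrix P i j * X j) := by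
        rw [sum_curlMatrix_mul_X hP hF, map_nsmul, nsmul_eq_mul, Nat.cast_add, Nat.cast_ofNat,
          inv_mul_cancel_left₀ (by positivity)]
      _ = ∑ j, eval x ((((d : ℝ) + 2)⁻¹ • curlMatrix P) i j) * x j := by
        simp [map_sum, Finset.mul_sum, smul_eval, mul_assoc]
end

section
/- Let H ∈ ℝ^{n×n} be a constant matrix, and write S = (H + Hᵀ)/2 and Ω = (H − Hᵀ)/2. Define H'(x) = S x 𝟏ᵀ − 𝟏 xᵀ S + Ω, where 𝟏 ∈ ℝⁿ is the all-ones vector. Then H'(x) is skew-symmetric for every x, and for every x in the affine hyperplane {x ∈ ℝⁿ : Σᵢ xᵢ = 1} one has diag(x)(H'(x)x − (xᵀH'(x)x)𝟏) = diag(x)(Hx − (xᵀHx)𝟏); that is, H'(x) and H induce the same replicator vector field. -/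
/-!
Split `H = S + Ω` into its symmetric and skew parts. Both rank-one terms of `H'(x)` are
built from the single vector `S x`, so they are each other's negative transpose, and
`H'(x)` is skew. On `∑ᵢ xᵢ = 1` they act on `x` as `S x - (xᵀ S x) 𝟏`, so `H'(x) x`
and `H x` differ by a multiple of `𝟏`. The replicator field cannot see such a shift.
-/

open Matrix

section

variable {ι R : Type*}

theorem half_smul_add_transpose_add_half_smul_sub_transpose [Field R] [NeZero (2 : R)]
    (H : Matrix ι ι R) :
    (1 / 2 : R) • (H + Hᵀ) + (1 / 2 : R) • (H - Hᵀ) = H := by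
  rw [← smul_add, add_add_sub_cancel, ← two_smul R H, smul_smul, one_div,
    inv_mul_cancel₀ two_ne_zero, one_smul]

theorem transpose_half_smul_sub_transpose [Field R] (H : Matrix ι ι R) :
    ((1 / 2 : R) • (H - Hᵀ))ᵀ = -((1 / 2 : R) • (H - Hᵀ)) := by
  rw [transpose_smul, transpose_sub, transpose_transpose, ← smul_neg, neg_sub]

variable [Fintype ι]

/-- The replicator field `φ(M)(x)` is `replicatorField (M x *ᵥ x) x`. -/
def replicatorField [CommRing R] (p x : ι → R) : ι → R :=
  fun i => x i * (p i - x ⬝ᵥ p)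

theorem replicatorField_sub_smul_one [CommRing R] {x : ι → R} (hx : ∑ i, x i = 1)
    (p : ι → R) (c : R) :
    replicatorField (p - c • 1) x = replicatorField p x := by
  ext i
  have hshift : x ⬝ᵥ (p - c • 1) = x ⬝ᵥ p - c := by
    rw [dotProduct_sub, dotProduct_smul, dotProduct_one, hx, smul_eq_mul, mul_one]
  simp only [replicatorField, hshift, Pi.sub_apply, Pi.smul_apply, Pi.one_apply, smul_eq_mul,
    mul_one]
  ring

def skewPayoff [CommRing R] (S Ω : Matrix ι ι R) (x : ι → R) : Matrix ι ι R :=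
  vecMulVec (S *ᵥ x) 1 - vecMulVec 1 (x ᵥ* S) + Ω

theorem transpose_skewPayoff [CommRing R] {S Ω : Matrix ι ι R} (hS : S.IsSymm)
    (hΩ : Ωᵀ = -Ω) (x : ι → R) :
    (skewPayoff S Ω x)ᵀ = -skewPayoff S Ω x := by
  have hxS : x ᵥ* S = S *ᵥ x := by rw [← mulVec_transpose, hS.eq]
  rw [skewPayoff, hxS, transpose_add, transpose_sub,
    transpose_vecMulVec, transpose_vecMulVec, hΩ]
  abel

theorem skewPayoff_mulVec [CommRing R] (S Ω : Matrix ι ι R) {x : ι → R}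
    (hx : ∑ i, x i = 1) :
    skewPayoff S Ω x *ᵥ x = (S + Ω) *ᵥ x - (x ⬝ᵥ S *ᵥ x) • 1 := by
  have hone : (1 : ι → R) ⬝ᵥ x = 1 := by rw [one_dotProduct, hx]
  rw [skewPayoff, add_mulVec, sub_mulVec, vecMulVec_mulVec, vecMulVec_mulVec, hone,
    ← dotProduct_mulVec, add_mulVec]
  simp only [MulOpposite.op_one, one_smul, op_smul_eq_smul]
  abel

end

/-- **Example 1.**  Given a constant matrix `H` with symmetric part `S` and
skew-symmetric part `Ω`, the matrix `H'(x) = S x 𝟏ᵀ − 𝟏 xᵀ S + Ω` is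
skew-symmetric, and `H'` induces the same replicator vector field as `H`
on the hyperplane `{x : ∑ᵢ xᵢ = 1}`. -/
theorem skew_payoff_same_replicator_field
    (n : ℕ) (H : Matrix (Fin n) (Fin n) ℝ)
    (S Ω : Matrix (Fin n) (Fin n) ℝ)
    (hS : S = (1 / 2 : ℝ) • (H + Hᵀ))
    (hΩ : Ω = (1 / 2 : ℝ) • (H - Hᵀ))
    (H' : (Fin n → ℝ) → Matrix (Fin n) (Fin n) ℝ)
    (hH' : ∀ x, H' x =
      vecMulVec (S *ᵥ x) (fun _ => 1) - vecMulVec (fun _ => 1) (x ᵥ* S) + Ω) :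
    (∀ x, (H' x)ᵀ = -(H' x)) ∧
    (∀ x : Fin n → ℝ, ∑ i, x i = 1 →
      ∀ i, x i * ((H' x *ᵥ x) i - x ⬝ᵥ (H' x *ᵥ x))
         = x i * ((H *ᵥ x) i - x ⬝ᵥ (H *ᵥ x))) := by
  have hH'S : ∀ x, H' x = skewPayoff S Ω x := hH'
  have hSsymm : S.IsSymm := hS ▸ (isSymm_add_transpose_self H).smul _
  have hΩskew : Ωᵀ = -Ω := hΩ ▸ transpose_half_smul_sub_transpose H
  have hH : S + Ω = H := hS ▸ hΩ ▸ half_smul_add_transpose_add_half_smul_sub_transpose H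
  refine ⟨fun x => hH'S x ▸ transpose_skewPayoff hSsymm hΩskew x, fun x hx i => ?_⟩
  change replicatorField (H' x *ᵥ x) x i = replicatorField (H *ᵥ x) x i
  rw [hH'S, skewPayoff_mulVec S Ω hx, replicatorField_sub_smul_one hx, hH]
end

section
/- Let d ≥ 0. The vector space Q^n_{(d+1)} of maps g : ℝⁿ → ℝⁿ with homogeneous polynomial components of degree d+1 satisfying xᵀ g(x) = 0 for all x ∈ ℝⁿ is spanned by the set V = { v_{ij}^α : |α| = d, 1 ≤ i < j ≤ n }, where v_{ij}^α(x) = x^{α+e_j} e_i − x^{α+e_i} e_j; here e_k denotes the k-th standard basis vector of ℝⁿ (and, in the exponent, the multi-index with a 1 in position k). -/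
/-!
Write `Φ g = ∑ i, X i * g i`. Send each monomial `x^β` to the field `x^{β - e_i} e_i` for some
`i` with `β i ≠ 0`; this gives a linear map `L` with `Φ ∘ L = id` on nonconstant monomials.
Two admissible choices `i ≠ j` differ by `±v_{ij}^α` with `α = β - e_i - e_j`, so checking on the
fields `x^γ e_i` shows `L (Φ g) ≡ g` modulo `span V` for every `g` of degree `d + 1`. If
`xᵀ g(x) = 0` then `Φ g = 0` (over the infinite field `ℝ`), hence `g ∈ span V`. Conversely each
`v_{ij}^α` lies in `Q` because `x_i x^{α+e_j} = x_j x^{α+e_i}`.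
-/

open MvPolynomial

noncomputable section

variable {σ R : Type*} [CommRing R]

section Contraction

variable [Fintype σ]

def innerX : (σ → MvPolynomial σ R) →ₗ[R] MvPolynomial σ R :=
  ∑ i, LinearMap.mulLeft R (X i) ∘ₗ LinearMap.proj i

theorem innerX_apply (g : σ → MvPolynomial σ R) : innerX g = ∑ i, X i * g i := by
  simp [innerX]

theorem innerX_single [DecidableEq σ] (i : σ) (p : MvPolynomial σ R) :
    innerX (Pi.single i p) = X i * p := by
  simp [innerX_apply, Pi.single_apply]

theorem innerX_eq_zero_iff [IsDomain R] [Infinite R] (g : σ → MvPolynomial σ R) :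
    innerX g = 0 ↔ ∀ x : σ → R, ∑ i, x i * eval x (g i) = 0 := by
  simp [MvPolynomial.funext_iff, innerX_apply]

variable (σ R) in
/-- The paper's `Q^n_{(d+1)}`, with `xᵀ g(x) = 0` read as an identity of polynomials. -/
def tangentialFields (d : ℕ) : Submodule R (σ → MvPolynomial σ R) :=
  Submodule.pi Set.univ (fun _ => homogeneousSubmodule σ R (d + 1)) ⊓ LinearMap.ker innerX

end Contraction

section Monomials

variable [DecidableEq σ]

theorem isHomogeneous_single_apply {p : MvPolynomial σ R} {m : ℕ}
    (hp : p.IsHomogeneous m) (i k : σ) :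
    (Pi.single (M := fun _ => MvPolynomial σ R) i p k).IsHomogeneous m := by
  rcases eq_or_ne k i with rfl | hki
  · simpa using hp
  · simpa [hki] using isHomogeneous_zero σ R m

theorem pi_homogeneousSubmodule_le [Fintype σ] {m : ℕ} {K : Submodule R (σ → MvPolynomial σ R)}
    (hK : ∀ (i : σ) (γ : σ →₀ ℕ), γ.degree = m → Pi.single i (monomial γ (1 : R)) ∈ K) :
    Submodule.pi Set.univ (fun _ => homogeneousSubmodule σ R m) ≤ K := by
  intro g hg
  rw [← Finset.univ_sum_single g]
  refine Submodule.sum_mem _ fun i _ => ?_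
  have hsum : (Pi.single i (g i) : σ → MvPolynomial σ R)
      = ∑ γ ∈ (g i).support, coeff γ (g i) • Pi.single i (monomial γ (1 : R)) := by
    conv_lhs => rw [(g i).as_sum]
    simp_rw [← Pi.single_smul, smul_monomial, smul_eq_mul, mul_one]
    exact map_sum (LinearMap.single R (fun _ => MvPolynomial σ R) i) _ _
  rw [hsum]
  refine Submodule.sum_mem _ fun γ hγ => Submodule.smul_mem _ _ (hK i γ ?_)
  rw [Finsupp.degree_eq_weight_one]
  exact hg i trivial (mem_support_iff.mp hγ)

open Classical in
def pivotVec (β : σ →₀ ℕ) : σ → MvPolynomial σ R :=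
  if h : ∃ i, β i ≠ 0 then Pi.single h.choose (monomial (β - Finsupp.single h.choose 1) 1)
  else 0

def lowerVec : MvPolynomial σ R →ₗ[R] (σ → MvPolynomial σ R) :=
  (basisMonomials σ R).constr R pivotVec

theorem lowerVec_monomial (β : σ →₀ ℕ) : lowerVec (monomial β (1 : R)) = pivotVec β := by
  simpa [lowerVec] using (basisMonomials σ R).constr_basis R pivotVec β

end Monomials

section Skew

variable [LinearOrder σ]

/-- The paper's `v_{ij}^α`. -/
def skewVec (α : σ →₀ ℕ) (i j : σ) : σ → MvPolynomial σ R :=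
  Pi.single i (monomial (α + Finsupp.single j 1) 1)
    - Pi.single j (monomial (α + Finsupp.single i 1) 1)

variable (R) in
def skewVecs (d : ℕ) : Set (σ → MvPolynomial σ R) :=
  {v | ∃ α i j, α.degree = d ∧ i < j ∧ v = skewVec α i j}

theorem skewVec_mem_span {d : ℕ} {α : σ →₀ ℕ} (hα : α.degree = d) (i j : σ) :
    skewVec α i j ∈ Submodule.span R (skewVecs R d) := by
  rcases lt_trichotomy i j with hij | rfl | hji
  · exact Submodule.subset_span ⟨α, i, j, hα, hij, rfl⟩
  · simp [skewVec]
  · rw [skewVec, ← neg_sub]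
    exact Submodule.neg_mem _ (Submodule.subset_span ⟨α, j, i, hα, hji, rfl⟩)

theorem skewVec_mem_tangentialFields [Fintype σ] {d : ℕ} {α : σ →₀ ℕ} (hα : α.degree = d)
    (i j : σ) : skewVec α i j ∈ tangentialFields σ R d := by
  have hdeg (k : σ) : (α + Finsupp.single k 1).degree = d + 1 := by simp [hα]
  refine Submodule.mem_inf.mpr ⟨fun k _ => ?_, ?_⟩
  · exact (isHomogeneous_single_apply (isHomogeneous_monomial _ (hdeg j)) i k).sub
      (isHomogeneous_single_apply (isHomogeneous_monomial _ (hdeg i)) j k)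
  · simp only [LinearMap.mem_ker, skewVec, map_sub, innerX_single, monomial_add_single, pow_one]
    ring

theorem pivotVec_sub_single_mem_span {d : ℕ} {γ : σ →₀ ℕ} (hγ : γ.degree = d + 1) (i : σ) :
    pivotVec (γ + Finsupp.single i 1) - Pi.single i (monomial γ 1)
      ∈ Submodule.span R (skewVecs R d) := by
  have h : ∃ j, (γ + Finsupp.single i 1 : σ →₀ ℕ) j ≠ 0 := ⟨i, by simp⟩
  rw [pivotVec, dif_pos h]
  generalize hj : h.choose = j
  replace hj : (γ + Finsupp.single i 1 : σ →₀ ℕ) j ≠ 0 := hj ▸ h.choose_spec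
  rcases eq_or_ne j i with rfl | hji
  · simp
  obtain ⟨α, rfl⟩ : ∃ α, γ = α + Finsupp.single j 1 := by
    refine ⟨γ - Finsupp.single j 1, (tsub_add_cancel_of_le ?_).symm⟩
    simpa [Finsupp.single_le_iff, Nat.one_le_iff_ne_zero, Finsupp.single_apply, hji.symm]
      using hj
  have hα : α.degree = d := by simpa using hγ
  rw [add_right_comm, add_tsub_cancel_right]
  exact skewVec_mem_span hα j i

theorem lowerVec_innerX_sub_mem_span [Fintype σ] {d : ℕ} {g : σ → MvPolynomial σ R}
    (hg : g ∈ Submodule.pi Set.univ (fun _ => homogeneousSubmodule σ R (d + 1))) :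
    lowerVec (innerX g) - g ∈ Submodule.span R (skewVecs R d) := by
  let K := (Submodule.span R (skewVecs R d)).comap
    (lowerVec ∘ₗ innerX (σ := σ) (R := R) - LinearMap.id)
  refine pi_homogeneousSubmodule_le (K := K) (fun i γ hγ => ?_) hg
  have hX : innerX (Pi.single i (monomial γ (1 : R))) = monomial (γ + Finsupp.single i 1) 1 := by
    rw [innerX_single, add_comm, monomial_single_add, pow_one]
  simpa [K, hX, lowerVec_monomial] using pivotVec_sub_single_mem_span hγ i

theorem span_skewVecs_eq_tangentialFields [Fintype σ] (d : ℕ) :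
    Submodule.span R (skewVecs R d) = tangentialFields σ R d := by
  refine le_antisymm (Submodule.span_le.mpr ?_) fun g hg => ?_
  · rintro _ ⟨α, i, j, hα, -, rfl⟩
    exact skewVec_mem_tangentialFields hα i j
  · obtain ⟨hhom, hker⟩ := Submodule.mem_inf.mp hg
    have := lowerVec_innerX_sub_mem_span hhom
    rwa [LinearMap.mem_ker.mp hker, map_zero, zero_sub, Submodule.neg_mem_iff] at this

end Skew

end

/-- **Lemma 2 (spanning set of `Q^n_{(d+1)}`).**  The space of maps `g : ℝⁿ → ℝⁿ`
with homogeneous polynomial components of degree `d+1` satisfying `xᵀ g(x) = 0`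
for all `x ∈ ℝⁿ` is spanned by the vectors
`v_{ij}^α(x) = x^{α+e_j} e_i − x^{α+e_i} e_j` for `|α| = d` and `i < j`. -/
theorem Q_spanned_by_v
    (n d : ℕ) :
    (Submodule.span ℝ
      { v : Fin n → MvPolynomial (Fin n) ℝ |
        ∃ (α : Fin n →₀ ℕ) (i j : Fin n), (∑ k, α k) = d ∧ i < j ∧
          v = Pi.single i (monomial (α + Finsupp.single j 1) (1 : ℝ))
              - Pi.single j (monomial (α + Finsupp.single i 1) (1 : ℝ)) } : Set _)
    = { g : Fin n → MvPolynomial (Fin n) ℝ |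
        (∀ i, (g i).IsHomogeneous (d + 1)) ∧
        ∀ x : Fin n → ℝ, ∑ i, x i * eval x (g i) = 0 } := by
  have hspan := span_skewVecs_eq_tangentialFields (σ := Fin n) (R := ℝ) d
  simp only [skewVecs, skewVec, Finsupp.degree_eq_sum] at hspan
  rw [hspan]
  ext g
  simp [tangentialFields, innerX_eq_zero_iff]
end

section
/- Let d ≥ 0 and let g : ℝⁿ → ℝⁿ be a map whose components are polynomials of degree at most d+1 satisfying xᵀ g(x) = 0 for all x ∈ ℝⁿ. Then there exists a matrix-valued map A : ℝⁿ → ℝ^{n×n} whose entries are polynomials of degree at most d, with A(x)ᵀ = −A(x) for all x, such that g(x) = A(x) x for all x ∈ ℝⁿ. -/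
/-!
Split each `gᵢ` into homogeneous components `gᵢ⁽ᵏ⁾`. The polynomial `∑ Xⱼ gⱼ` vanishes, hence so
does each of its homogeneous layers `∑ Xⱼ gⱼ⁽ᵏ⁾`; differentiating a layer in `Xᵢ` gives
`∑ Xⱼ ∂ᵢ gⱼ⁽ᵏ⁾ = -gᵢ⁽ᵏ⁾`, while Euler's identity gives `∑ Xⱼ ∂ⱼ gᵢ⁽ᵏ⁾ = k gᵢ⁽ᵏ⁾`. Subtracting,
the skew-symmetric matrix `Aᵢⱼ = ∑ₖ (∂ⱼ gᵢ⁽ᵏ⁾ - ∂ᵢ gⱼ⁽ᵏ⁾) / (k + 1)` satisfies `A X = g`, and its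
entries have degree at most `d` because `k ≤ d + 1`.
-/

open MvPolynomial Matrix

namespace MvPolynomial

section CommSemiring

variable {σ R : Type*} [CommSemiring R]

attribute [local instance] MvPolynomial.gradedAlgebra in
theorem homogeneousComponent_X_mul (k : ℕ) (s : σ) (p : MvPolynomial σ R) :
    homogeneousComponent (k + 1) (X s * p) = X s * homogeneousComponent k p := by
  have := DirectSum.coe_decompose_mul_of_left_mem_of_le (homogeneousSubmodule σ R) (b := p)
    (isHomogeneous_X R s) (Nat.le_add_left 1 k)
  rw [Nat.add_sub_cancel] at this
  simpa only [DirectSum.decompose, Equiv.coe_fn_mk, decomposition.decompose'_apply] using this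

variable [Fintype σ] {f : σ → MvPolynomial σ R}

theorem sum_X_mul_homogeneousComponent_eq_zero (hf : ∑ j, X j * f j = 0) (k : ℕ) :
    ∑ j, X j * homogeneousComponent k (f j) = 0 := by
  simpa only [map_sum, homogeneousComponent_X_mul, map_zero] using
    congrArg (homogeneousComponent (k + 1)) hf

theorem add_sum_X_mul_pderiv_eq_zero (hf : ∑ j, X j * f j = 0) (i : σ) :
    f i + ∑ j, X j * pderiv i (f j) = 0 := by
  classical
  simpa [pderiv_mul, pderiv_X, Pi.single_apply, Finset.sum_add_distrib, add_comm] using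
    congrArg (pderiv i) hf

end CommSemiring

section CommRing

variable {σ R : Type*} [CommRing R] [Fintype σ] {f : σ → MvPolynomial σ R}

theorem sum_pderiv_sub_pderiv_mul_X {k : ℕ} (hhom : ∀ j, (f j).IsHomogeneous k)
    (hf : ∑ j, X j * f j = 0) (i : σ) :
    ∑ j, (pderiv j (f i) - pderiv i (f j)) * X j = (k + 1) • f i := by
  have hEuler := (hhom i).sum_X_mul_pderiv
  have hdiff := add_sum_X_mul_pderiv_eq_zero hf i
  calc ∑ j, (pderiv j (f i) - pderiv i (f j)) * X j
      = ∑ j, X j * pderiv j (f i) - ∑ j, X j * pderiv i (f j) := by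
        rw [← Finset.sum_sub_distrib]
        exact Finset.sum_congr rfl fun j _ => by ring
    _ = (k + 1) • f i := by
        rw [hEuler, eq_neg_of_add_eq_zero_right hdiff, succ_nsmul, sub_neg_eq_add]

end CommRing

section Field

variable {σ K : Type*} [Field K]

noncomputable def skewMatrix (d : ℕ) (f : σ → MvPolynomial σ K) :
    Matrix σ σ (MvPolynomial σ K) :=
  Matrix.of fun i j => ∑ k ∈ Finset.range (d + 2), ((k : K) + 1)⁻¹ •
    (pderiv j (homogeneousComponent k (f i)) - pderiv i (homogeneousComponent k (f j)))

variable (d : ℕ) (f : σ → MvPolynomial σ K)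

theorem skewMatrix_apply (i j : σ) : skewMatrix d f i j = ∑ k ∈ Finset.range (d + 2),
    ((k : K) + 1)⁻¹ •
      (pderiv j (homogeneousComponent k (f i)) - pderiv i (homogeneousComponent k (f j))) :=
  rfl

theorem skewMatrix_transpose : (skewMatrix d f)ᵀ = -skewMatrix d f := by
  refine Matrix.ext fun i j => ?_
  simp only [transpose_apply, Matrix.neg_apply, skewMatrix_apply, ← Finset.sum_neg_distrib,
    ← smul_neg, neg_sub]

theorem totalDegree_skewMatrix_le (i j : σ) : (skewMatrix d f i j).totalDegree ≤ d := by
  rw [skewMatrix_apply]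
  apply totalDegree_finsetSum_le
  intro k hk
  refine (totalDegree_smul_le _ _).trans ?_
  have hhom := ((homogeneousComponent_isHomogeneous k (f i)).pderiv (i := j)).sub
    ((homogeneousComponent_isHomogeneous k (f j)).pderiv (i := i))
  exact hhom.totalDegree_le.trans (by rw [Finset.mem_range] at hk; omega)

variable [Fintype σ] [CharZero K]

theorem skewMatrix_mulVec_X (hdeg : ∀ i, (f i).totalDegree ≤ d + 1)
    (hf : ∑ j, X j * f j = 0) : skewMatrix d f *ᵥ X = f := by
  funext i
  have hlayer (k : ℕ) : ∑ j, ((k : K) + 1)⁻¹ • (pderiv j (homogeneousComponent k (f i)) -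
      pderiv i (homogeneousComponent k (f j))) * X j = homogeneousComponent k (f i) := by
    simp only [smul_mul_assoc, ← Finset.smul_sum,
      sum_pderiv_sub_pderiv_mul_X (fun j => homogeneousComponent_isHomogeneous k (f j))
        (sum_X_mul_homogeneousComponent_eq_zero hf k) i]
    rw [← Nat.cast_smul_eq_nsmul K, smul_smul, Nat.cast_add_one,
      inv_mul_cancel₀ (Nat.cast_add_one_ne_zero k), one_smul]
  calc (skewMatrix d f *ᵥ X) i
      = ∑ k ∈ Finset.range (d + 2), homogeneousComponent k (f i) := by
        simp only [mulVec, dotProduct, skewMatrix_apply, Finset.sum_mul]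
        rw [Finset.sum_comm]
        exact Finset.sum_congr rfl fun k _ => hlayer k
    _ = f i := by
        conv_rhs => rw [← sum_homogeneousComponent (f i)]
        refine (Finset.sum_subset (Finset.range_subset_range.mpr (by have := hdeg i; omega))
          fun k _ hk => homogeneousComponent_eq_zero k (f i) ?_).symm
        rw [Finset.mem_range, not_lt] at hk
        omega

end Field

end MvPolynomial

/-- **Proposition 1.**  If `g : ℝⁿ → ℝⁿ` has polynomial components of degree at most
`d+1` and satisfies `xᵀ g(x) = 0` for all `x ∈ ℝⁿ`, then there is a skew-symmetric
polynomial matrix `A(x)` of degree at most `d` with `g(x) = A(x) x` for all `x ∈ ℝⁿ`. -/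
theorem skew_representation_of_Q
    (n d : ℕ) (g : Fin n → MvPolynomial (Fin n) ℝ)
    (hdeg : ∀ i, (g i).totalDegree ≤ d + 1)
    (hzero : ∀ x : Fin n → ℝ, ∑ i, x i * eval x (g i) = 0) :
    ∃ A : Matrix (Fin n) (Fin n) (MvPolynomial (Fin n) ℝ),
      (∀ i j, (A i j).totalDegree ≤ d) ∧
      (∀ x : Fin n → ℝ,
        (Matrix.of fun i j => eval x (A i j))ᵀ = -(Matrix.of fun i j => eval x (A i j))) ∧
      (∀ x : Fin n → ℝ, ∀ i, eval x (g i) = ∑ j, eval x (A i j) * x j) := by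
  have hP : ∑ i, X i * g i = 0 := MvPolynomial.funext fun x => by simpa using hzero x
  refine ⟨skewMatrix d g, totalDegree_skewMatrix_le d g, fun x => ?_, fun x i => ?_⟩
  · ext i j
    simpa using congrArg (eval x) (congrFun₂ (skewMatrix_transpose d g) i j)
  · simpa [mulVec, dotProduct, eq_comm] using
      congrArg (eval x) (congrFun (skewMatrix_mulVec_X d g hdeg hP) i)
end

section
/- Let d ≥ 0 and let g : ℝⁿ → ℝⁿ be a map whose components are polynomials of degree at most d+1 with no constant term, satisfying xᵀ g(x) = 0 for all x in the affine hyperplane H = {x ∈ ℝⁿ : Σᵢ xᵢ = 1}. Then there exists a scalar polynomial s in x₁,…,xₙ of degree at most d+1 such that xᵀ g(x) = (1 − xᵀ𝟏) s(x) for all x ∈ ℝⁿ; moreover, s contains neither a constant term nor any linear term. -/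
/-!
Put `P = ∑ i, X i * g i`. The substitution `x i₀ ↦ x i₀ + (1 - ∑ i, x i)` is congruent to the
identity modulo `1 - ∑ i, X i` and maps every point onto the hyperplane, where `P` vanishes;
hence `1 - ∑ i, X i` divides `P`. Since `MvPolynomial` over `ℝ` is a domain, the cofactor `s`
has degree one less than `P`. Finally `s = P + (∑ i, X i) * s` with `P` in the square of the
ideal of the variables shows, by bootstrapping, that `s` lies in that square as well, i.e. has no
constant and no linear term.
-/

open MvPolynomial

namespace MvPolynomial

variable {σ R : Type*}

theorem sub_aeval_mem_of_forall_X_sub_mem [CommRing R] {I : Ideal (MvPolynomial σ R)}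
    {f : σ → MvPolynomial σ R} (hf : ∀ i, X i - f i ∈ I) (p : MvPolynomial σ R) :
    p - aeval f p ∈ I := by
  have hcomp : (Ideal.Quotient.mkₐ R I).comp (aeval f) = Ideal.Quotient.mkₐ R I :=
    algHom_ext fun i => by simpa [Ideal.Quotient.eq] using I.neg_mem (hf i)
  rw [← Ideal.Quotient.eq]
  simpa using (AlgHom.congr_fun hcomp p).symm

theorem one_sub_sum_X_dvd_of_eval_eq_zero [CommRing R] [IsDomain R] [Infinite R] [Fintype σ]
    [Nonempty σ] {p : MvPolynomial σ R} (hp : ∀ x : σ → R, ∑ i, x i = 1 → eval x p = 0) :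
    (1 - ∑ i, X i) ∣ p := by
  classical
  obtain ⟨i₀⟩ := ‹Nonempty σ›
  set u : MvPolynomial σ R := ∑ i, X i
  set f : σ → MvPolynomial σ R := fun i => X i + (Pi.single i₀ (1 - u) : σ → _) i
  have hf : ∀ i, X i - f i ∈ Ideal.span {1 - u} := fun i => by
    rcases eq_or_ne i i₀ with rfl | hi
    · simpa [f] using neg_mem (Ideal.mem_span_singleton_self (1 - u))
    · simp [f, hi]
  have hfp : aeval f p = 0 := MvPolynomial.funext fun x => by
    rw [map_zero, aeval_eq_bind₁, eval, eval₂Hom_bind₁]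
    refine hp _ ?_
    simp [f, u, Finset.sum_add_distrib, Pi.apply_single (fun _ => eval x) (fun _ => map_zero _),
      Finset.sum_pi_single']
  have := sub_aeval_mem_of_forall_X_sub_mem hf p
  rwa [hfp, sub_zero, Ideal.mem_span_singleton] at this

theorem totalDegree_one_sub_sum_X [CommRing R] [Nontrivial R] [Fintype σ] [Nonempty σ] :
    (1 - ∑ i, X i : MvPolynomial σ R).totalDegree = 1 := by
  classical
  obtain ⟨i₀⟩ := ‹Nonempty σ›
  apply le_antisymm
  · refine (totalDegree_sub _ _).trans (max_le (by simp) ?_)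
    exact (totalDegree_finsetSum _ _).trans (Finset.sup_le fun i _ => (totalDegree_X i).le)
  · have : coeff (Finsupp.single i₀ 1) (1 - ∑ i, X i : MvPolynomial σ R) ≠ 0 := by
      simp [coeff_sum, coeff_X, coeff_one, Finsupp.single_left_inj one_ne_zero, eq_comm]
    simpa using le_totalDegree (mem_support_iff.mpr this)

theorem totalDegree_one_sub_sum_X_mul [CommRing R] [IsDomain R] [Fintype σ] [Nonempty σ]
    {s : MvPolynomial σ R} (hs : s ≠ 0) :
    ((1 - ∑ i, X i) * s).totalDegree = s.totalDegree + 1 := by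
  have : (1 - ∑ i, X i : MvPolynomial σ R) ≠ 0 := fun h => by
    simpa [h] using totalDegree_one_sub_sum_X (σ := σ) (R := R)
  rw [totalDegree_mul_of_isDomain this hs, totalDegree_one_sub_sum_X, add_comm]

theorem mem_idealOfVars_iff_coeff_zero [CommSemiring R] (p : MvPolynomial σ R) :
    p ∈ idealOfVars σ R ↔ coeff 0 p = 0 := by
  rw [← pow_one (idealOfVars σ R), mem_pow_idealOfVars_iff']
  simp [Finsupp.degree_eq_zero_iff]

end MvPolynomial

theorem Ideal.mem_pow_of_one_sub_mul_mem_pow {R : Type*} [CommRing R] {I : Ideal R} {u s : R}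
    (hu : u ∈ I) {k : ℕ} (h : (1 - u) * s ∈ I ^ k) : s ∈ I ^ k := by
  induction k with
  | zero => simp
  | succ k ih =>
    have hs : s ∈ I ^ k := ih (Ideal.pow_le_pow_right k.le_succ h)
    have hus : u * s ∈ I ^ (k + 1) := by
      rw [pow_succ']
      exact Ideal.mul_mem_mul hu hs
    rw [show s = (1 - u) * s + u * s by ring]
    exact add_mem h hus

/-- **Lemma 4 (factorization).**  If `g` has polynomial components of degree at most
`d+1` with no constant term and `xᵀ g(x) = 0` on the hyperplane `{x : ∑ᵢ xᵢ = 1}`,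
then `xᵀ g(x) = (1 − xᵀ𝟏) s(x)` for a scalar polynomial `s` of degree at most `d+1`
containing neither a constant nor a linear term. -/
theorem factor_out_one_minus_sum
    (n d : ℕ) (g : Fin n → MvPolynomial (Fin n) ℝ)
    (hdeg : ∀ i, (g i).totalDegree ≤ d + 1)
    (hconst : ∀ i, coeff 0 (g i) = 0)
    (hzero : ∀ x : Fin n → ℝ, ∑ i, x i = 1 → ∑ i, x i * eval x (g i) = 0) :
    ∃ s : MvPolynomial (Fin n) ℝ,
      s.totalDegree ≤ d + 1 ∧
      (∀ x : Fin n → ℝ, ∑ i, x i * eval x (g i) = (1 - ∑ i, x i) * eval x s) ∧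
      coeff 0 s = 0 ∧
      (∀ α : Fin n →₀ ℕ, (∑ k, α k) = 1 → coeff α s = 0) := by
  rcases isEmpty_or_nonempty (Fin n) with hn | hn
  · exact ⟨0, by simp⟩
  set P : MvPolynomial (Fin n) ℝ := ∑ i, X i * g i
  have hP_eval : ∀ x, eval x P = ∑ i, x i * eval x (g i) := by simp [P]
  obtain ⟨s, hPs⟩ : (1 - ∑ i, X i) ∣ P :=
    one_sub_sum_X_dvd_of_eval_eq_zero fun x hx => (hP_eval x).trans (hzero x hx)
  have hX : ∀ i, X i ∈ idealOfVars (Fin n) ℝ := fun i => Ideal.subset_span ⟨i, rfl⟩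
  have hg : ∀ i, g i ∈ idealOfVars (Fin n) ℝ := fun i =>
    (mem_idealOfVars_iff_coeff_zero _).mpr (hconst i)
  have hP_mem : P ∈ idealOfVars (Fin n) ℝ ^ 2 :=
    Ideal.sum_mem _ fun i _ => pow_two (idealOfVars (Fin n) ℝ) ▸ Ideal.mul_mem_mul (hX i) (hg i)
  have hP_deg : P.totalDegree ≤ d + 2 :=
    (totalDegree_finsetSum _ _).trans <| Finset.sup_le fun i _ =>
      (totalDegree_mul _ _).trans (by rw [totalDegree_X]; linarith [hdeg i])
  have hs_mem : s ∈ idealOfVars (Fin n) ℝ ^ 2 :=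
    Ideal.mem_pow_of_one_sub_mul_mem_pow (Ideal.sum_mem _ fun i _ => hX i) (hPs ▸ hP_mem)
  rw [mem_pow_idealOfVars_iff'] at hs_mem
  refine ⟨s, ?_, fun x => ?_, hs_mem 0 (by simp),
    fun α hα => hs_mem α (by simp [Finsupp.degree_eq_sum, hα])⟩
  · rcases eq_or_ne s 0 with rfl | hs
    · simp
    · have := totalDegree_one_sub_sum_X_mul hs
      rw [← hPs] at this
      omega
  · rw [← hP_eval, hPs, map_mul, map_sub, map_one, map_sum]
    simp only [eval_X]
end

section
/- Let d ≥ 1 and let M : ℝⁿ → ℝ^{n×n} be an arbitrary matrix-valued map with polynomial entries of degree at most d−1 (not necessarily symmetric). Then there exists a matrix-valued map B : ℝⁿ → ℝ^{n×n} with polynomial entries of degree at most d satisfying B(x)ᵀ = −B(x) for all x, such that M(x)x − (xᵀ M(x) x) 𝟏 = B(x) x for all x in the affine hyperplane {x ∈ ℝⁿ : Σᵢ xᵢ = 1}. -/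
open MvPolynomial Matrix

/-!
Put `a(x) := M(x) x`, a polynomial vector of degree at most `d`, and take `B(x)ᵢⱼ := aᵢ(x) − aⱼ(x)`,
which is skew-symmetric of degree at most `d`. Then `(B(x) x)ᵢ = aᵢ(x) ∑ⱼ xⱼ − xᵀ a(x)`, and the
factor `∑ⱼ xⱼ` is `1` on the hyperplane.
-/

lemma MvPolynomial.totalDegree_sum_mul_X_le {σ R : Type*} [CommSemiring R] [Fintype σ]
    (p : σ → MvPolynomial σ R) {k : ℕ} (hp : ∀ j, (p j).totalDegree ≤ k) :
    (∑ j, p j * X j).totalDegree ≤ k + 1 := by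
  refine (totalDegree_finsetSum _ _).trans (Finset.sup_le fun j _ => ?_)
  calc (p j * X j).totalDegree ≤ (p j).totalDegree + (X j : MvPolynomial σ R).totalDegree :=
        totalDegree_mul _ _
    _ ≤ k + 1 := by
        gcongr
        · exact hp j
        · exact (totalDegree_monomial_le (Finsupp.single j 1) (1 : R)).trans (by simp)

lemma Finset.sum_sub_mul_eq {ι R : Type*} [CommRing R] [Fintype ι] (a x : ι → R) (i : ι) :
    ∑ j, (a i - a j) * x j = a i * ∑ j, x j - ∑ j, a j * x j := by
  simp only [sub_mul, Finset.sum_sub_distrib, Finset.mul_sum]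

/-- **Appendix B (strengthened Lemma 7).**  For an arbitrary (not necessarily
symmetric) polynomial matrix `M(x)` of degree at most `d−1`, there exists a
skew-symmetric polynomial matrix `B(x)` of degree at most `d` such that
`M(x)x − (xᵀ M(x) x) 𝟏 = B(x) x` for all `x` in the hyperplane `{x : ∑ᵢ xᵢ = 1}`. -/
theorem strengthened_h_eq_B_mul_x
    (n d : ℕ) (hd : 1 ≤ d)
    (M : Matrix (Fin n) (Fin n) (MvPolynomial (Fin n) ℝ))
    (hdeg : ∀ i j, (M i j).totalDegree ≤ d - 1) :
    ∃ B : Matrix (Fin n) (Fin n) (MvPolynomial (Fin n) ℝ),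
      (∀ i j, B j i = - B i j) ∧
      (∀ i j, (B i j).totalDegree ≤ d) ∧
      (∀ x : Fin n → ℝ, ∑ i, x i = 1 →
        ∀ i, (∑ j, eval x (M i j) * x j) - ∑ i', ∑ j, x i' * eval x (M i' j) * x j
          = ∑ j, eval x (B i j) * x j) := by
  set a : Fin n → MvPolynomial (Fin n) ℝ := fun i => ∑ k, M i k * X k
  have ha_deg (i : Fin n) : (a i).totalDegree ≤ d :=
    (totalDegree_sum_mul_X_le _ (hdeg i)).trans (by omega)
  have ha_eval (x : Fin n → ℝ) (i : Fin n) : eval x (a i) = ∑ k, eval x (M i k) * x k := by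
    simp [a]
  refine ⟨fun i j => a i - a j, fun i j => (neg_sub _ _).symm,
    fun i j => (totalDegree_sub _ _).trans (max_le (ha_deg i) (ha_deg j)), fun x hx i => ?_⟩
  calc _ = eval x (a i) * ∑ j, x j - ∑ j, eval x (a j) * x j := by
        simp only [ha_eval, hx, mul_one, Finset.sum_mul]
        congr 1
        exact Finset.sum_congr rfl fun _ _ => Finset.sum_congr rfl fun _ _ => by ring
    _ = ∑ j, eval x (a i - a j) * x j := by
        simp only [map_sub]
        exact (Finset.sum_sub_mul_eq (fun j => eval x (a j)) x i).symm
end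

section
/- Let n = 3 and define g : ℝ³ → ℝ³ by g(x) = (−x₁² + x₁x₂ + x₁, −2x₁², −x₁²). Then xᵀ g(x) = 0 for all x with x₁ + x₂ + x₃ = 1, yet there is no constant matrix H ∈ ℝ^{3×3} such that g(x) = Hx − (xᵀHx)𝟏 for all x in the hyperplane {x ∈ ℝ³ : x₁ + x₂ + x₃ = 1}. -/
/-!
Subtracting two coordinates of `Hx − (xᵀHx)𝟏` cancels the quadratic term, so a representation
would make `g₀ − g₁ = x₀² + x₀x₁ + x₀` the restriction of a linear form to the hyperplane.
Along the line `t ↦ (t, 0, 1 − t)` in the hyperplane it equals `t² + t`, which is not affine.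
-/

open Matrix

def exampleField (x : Fin 3 → ℝ) : Fin 3 → ℝ :=
  ![-(x 0) ^ 2 + x 0 * x 1 + x 0, -2 * (x 0) ^ 2, -(x 0) ^ 2]

theorem dotProduct_exampleField (x : Fin 3 → ℝ) :
    x ⬝ᵥ exampleField x = x 0 ^ 2 * (1 - (x 0 + x 1 + x 2)) := by
  simp [dotProduct, Fin.sum_univ_three, exampleField]
  ring

theorem exampleField_zero_sub_one (x : Fin 3 → ℝ) :
    exampleField x 0 - exampleField x 1 = x 0 ^ 2 + x 0 * x 1 + x 0 := by
  simp only [exampleField, cons_val_zero, cons_val_one]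
  ring

theorem not_exists_linearMap_eq_on_hyperplane :
    ¬ ∃ ℓ : (Fin 3 → ℝ) →ₗ[ℝ] ℝ,
      ∀ x : Fin 3 → ℝ, x 0 + x 1 + x 2 = 1 → x 0 ^ 2 + x 0 * x 1 + x 0 = ℓ x := by
  rintro ⟨ℓ, hℓ⟩
  have hu := hℓ ![1, 0, 0] (by simp)
  have hv := hℓ ![2, 0, -1] (by simp; norm_num)
  have hw := hℓ ![0, 0, 1] (by simp)
  have hmid : ![(2 : ℝ), 0, -1] + ![0, 0, 1] = (2 : ℝ) • ![1, 0, 0] := by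
    ext i; fin_cases i <;> norm_num
  have hℓmid := congrArg ℓ hmid
  rw [map_add, map_smul, ← hu, ← hv, ← hw] at hℓmid
  norm_num at hℓmid

/-- **Example 2 (counterexample).**  For `n = 3`, the vector field
`g(x) = (−x₁² + x₁x₂ + x₁, −2x₁², −x₁²)` satisfies `xᵀ g(x) = 0` on the hyperplane
`{x : x₁ + x₂ + x₃ = 1}`, yet no constant matrix `H ∈ ℝ^{3×3}` satisfies
`g(x) = Hx − (xᵀHx)𝟏` on that hyperplane. -/
theorem counterexample_no_constant_H
    (g : (Fin 3 → ℝ) → Fin 3 → ℝ)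
    (hg : ∀ x, g x = ![-(x 0) ^ 2 + x 0 * x 1 + x 0, -2 * (x 0) ^ 2, -(x 0) ^ 2]) :
    (∀ x : Fin 3 → ℝ, x 0 + x 1 + x 2 = 1 → ∑ i, x i * g x i = 0) ∧
    ¬ ∃ H : Matrix (Fin 3) (Fin 3) ℝ,
        ∀ x : Fin 3 → ℝ, x 0 + x 1 + x 2 = 1 →
          ∀ i, g x i = (H *ᵥ x) i - x ⬝ᵥ (H *ᵥ x) := by
  obtain rfl : g = exampleField := funext hg
  refine ⟨fun x hx => ?_, ?_⟩
  · change x ⬝ᵥ exampleField x = 0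
    rw [dotProduct_exampleField, hx, sub_self, mul_zero]
  · rintro ⟨H, hH⟩
    refine not_exists_linearMap_eq_on_hyperplane
      ⟨LinearMap.proj 0 ∘ₗ H.mulVecLin - LinearMap.proj 1 ∘ₗ H.mulVecLin, fun x hx => ?_⟩
    rw [← exampleField_zero_sub_one, hH x hx 0, hH x hx 1]
    simp
end
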